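/- For all nonnegative integers n, all y ∈ ℂ, and positive integers w₁, w₂, w₃ with ξ^{d w₁} ≠ 1, ξ^{d w₂} ≠ 1, ξ^{d w₃} ≠ 1: Σ_{k+l+m=n} (n!/(k! l! m!)) B_{k,χ,ξ^{w₃}}(w₁ y) B_{l,χ,ξ^{w₁}}(w₂ y) B_{m,χ,ξ^{w₂}}(w₃ y) w₃^k w₁^l w₂^m = Σ_{k+l+m=n} (n!/(k! l! m!)) B_{k,χ,ξ^{w₂}}(w₁ y) B_{l,χ,ξ^{w₁}}(w₃ y) B_{m,χ,ξ^{w₃}}(w₂ y) w₂^k w₁^l w₃^m. -/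

import Mathlib

open PowerSeries Finset

/-- `Σ_{a=0}^{d-1} χ(a) ζ^a e^{at}` as a formal power series in `ℂ⟦t⟧`. -/
noncomputable def twistSum (d : ℕ) (χ : DirichletCharacter ℂ d) (ζ : ℂ) : PowerSeries ℂ :=
  ∑ a ∈ Finset.range d,
    PowerSeries.C (χ (a : ZMod d) * ζ ^ a) * PowerSeries.rescale (a : ℂ) (PowerSeries.exp ℂ)

/-- Generalized twisted Bernoulli polynomial `B_{n,χ,ζ}(x)`, defined by
`(t e^{xt}/(ζ^d e^{dt} − 1)) Σ_{a=0}^{d−1} χ(a) ζ^a e^{at} = Σ_n B_{n,χ,ζ}(x) tⁿ/n!`. -/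
noncomputable def genBern (d : ℕ) (χ : DirichletCharacter ℂ d) (ζ : ℂ) (n : ℕ) (x : ℂ) : ℂ :=
  (n.factorial : ℂ) * PowerSeries.coeff n
    (PowerSeries.X * PowerSeries.rescale x (PowerSeries.exp ℂ) * twistSum d χ ζ *
      (PowerSeries.C (ζ ^ d) * PowerSeries.rescale (d : ℂ) (PowerSeries.exp ℂ) - 1)⁻¹)

/-- Generalized twisted power sum `S_k(m; χ, ζ) = Σ_{a=0}^{m} χ(a) ζ^a a^k` (with `0^0 = 1`). -/
noncomputable def genPowSum (d : ℕ) (χ : DirichletCharacter ℂ d) (ζ : ℂ) (k m : ℕ) : ℂ :=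
  ∑ a ∈ Finset.range (m + 1), χ (a : ZMod d) * ζ ^ a * (a : ℂ) ^ k

/-- The full generating series of `genBern d χ ζ · x`. -/
noncomputable def genBernSeries (d : ℕ) (χ : DirichletCharacter ℂ d) (ζ : ℂ) (x : ℂ) :
    PowerSeries ℂ :=
  PowerSeries.X * PowerSeries.rescale x (PowerSeries.exp ℂ) * twistSum d χ ζ *
    (PowerSeries.C (ζ ^ d) * PowerSeries.rescale (d : ℂ) (PowerSeries.exp ℂ) - 1)⁻¹

lemma genBern_eq (d : ℕ) (χ : DirichletCharacter ℂ d) (ζ : ℂ) (n : ℕ) (x : ℂ) :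
    genBern d χ ζ n x = (n.factorial : ℂ) * PowerSeries.coeff n (genBernSeries d χ ζ x) := rfl

/-- Pull the `e^{xt}` factor out of a rescaled generating series. -/
lemma rescale_genBernSeries (d : ℕ) (χ : DirichletCharacter ℂ d) (ζ : ℂ) (x u : ℂ) :
    PowerSeries.rescale u (genBernSeries d χ ζ x) =
      PowerSeries.rescale (x * u) (PowerSeries.exp ℂ) *
        PowerSeries.rescale u (PowerSeries.X * twistSum d χ ζ *
          (PowerSeries.C (ζ ^ d) * PowerSeries.rescale (d : ℂ) (PowerSeries.exp ℂ) - 1)⁻¹) := by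
  simp only [genBernSeries, map_mul, PowerSeries.rescale_rescale]
  ring

lemma coeff_mul3 (A B C : PowerSeries ℂ) (n : ℕ) :
    PowerSeries.coeff n (A * B * C) =
      ∑ k ∈ Finset.range (n + 1), ∑ l ∈ Finset.range (n + 1 - k),
        PowerSeries.coeff k A * PowerSeries.coeff l B * PowerSeries.coeff (n - k - l) C := by
  rw [mul_assoc, PowerSeries.coeff_mul, Finset.Nat.sum_antidiagonal_eq_sum_range_succ_mk]
  refine Finset.sum_congr rfl fun k hk => ?_
  rw [PowerSeries.coeff_mul, Finset.Nat.sum_antidiagonal_eq_sum_range_succ_mk, Finset.mul_sum]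
  have hk' : k ≤ n := by simpa [Nat.lt_succ_iff] using hk
  have h1 : n - k + 1 = n + 1 - k := by omega
  simp only [Nat.succ_eq_add_one, h1]
  exact Finset.sum_congr rfl fun l hl => by ring

/-- The standard rewriting of the trinomial Bernoulli sum as a coefficient of a product. -/
lemma trinomial_sum_eq (d : ℕ) (χ : DirichletCharacter ℂ d) (ζ₁ ζ₂ ζ₃ : ℂ)
    (x₁ x₂ x₃ : ℂ) (a b c : ℂ) (n : ℕ) :
    ∑ k ∈ Finset.range (n + 1), ∑ l ∈ Finset.range (n + 1 - k),
        (n.factorial : ℂ) / ((k.factorial : ℂ) * (l.factorial : ℂ) *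
            ((n - k - l).factorial : ℂ)) *
          genBern d χ ζ₁ k x₁ * genBern d χ ζ₂ l x₂ * genBern d χ ζ₃ (n - k - l) x₃ *
          a ^ k * b ^ l * c ^ (n - k - l)
      = (n.factorial : ℂ) * PowerSeries.coeff n
          (PowerSeries.rescale a (genBernSeries d χ ζ₁ x₁) *
            PowerSeries.rescale b (genBernSeries d χ ζ₂ x₂) *
            PowerSeries.rescale c (genBernSeries d χ ζ₃ x₃)) := by
  rw [coeff_mul3, Finset.mul_sum]
  refine Finset.sum_congr rfl fun k hk => ?_
  rw [Finset.mul_sum]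
  refine Finset.sum_congr rfl fun l hl => ?_
  simp only [PowerSeries.coeff_rescale, genBern_eq]
  have hkf : ((k.factorial : ℂ)) ≠ 0 := Nat.cast_ne_zero.mpr k.factorial_ne_zero
  have hlf : ((l.factorial : ℂ)) ≠ 0 := Nat.cast_ne_zero.mpr l.factorial_ne_zero
  have hmf : (((n - k - l).factorial : ℂ)) ≠ 0 := Nat.cast_ne_zero.mpr (n - k - l).factorial_ne_zero
  field_simp

/-- Theorem 10 (type Λ₁₂⁰, two symmetries in `w₁, w₂, w₃`). -/
theorem stmt10 (d : ℕ) (hd : 0 < d) (χ : DirichletCharacter ℂ d) (hχ : χ.IsPrimitive)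
    (ξ : ℂ) (hroot : ∃ m : ℕ, 0 < m ∧ ξ ^ m = 1)
    (n : ℕ) (w₁ w₂ w₃ : ℕ) (hw₁ : 0 < w₁) (hw₂ : 0 < w₂) (hw₃ : 0 < w₃)
    (h₁ : ξ ^ (d * w₁) ≠ 1) (h₂ : ξ ^ (d * w₂) ≠ 1) (h₃ : ξ ^ (d * w₃) ≠ 1) (y : ℂ) :
    ∑ k ∈ Finset.range (n + 1), ∑ l ∈ Finset.range (n + 1 - k),
        (n.factorial : ℂ) / ((k.factorial : ℂ) * (l.factorial : ℂ) *
            ((n - k - l).factorial : ℂ)) *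
          genBern d χ (ξ ^ w₃) k (w₁ * y) *
          genBern d χ (ξ ^ w₁) l (w₂ * y) *
          genBern d χ (ξ ^ w₂) (n - k - l) (w₃ * y) *
          (w₃ : ℂ) ^ k * (w₁ : ℂ) ^ l * (w₂ : ℂ) ^ (n - k - l)
      = ∑ k ∈ Finset.range (n + 1), ∑ l ∈ Finset.range (n + 1 - k),
          (n.factorial : ℂ) / ((k.factorial : ℂ) * (l.factorial : ℂ) *
              ((n - k - l).factorial : ℂ)) *
            genBern d χ (ξ ^ w₂) k (w₁ * y) *
            genBern d χ (ξ ^ w₁) l (w₃ * y) *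
            genBern d χ (ξ ^ w₃) (n - k - l) (w₂ * y) *
            (w₂ : ℂ) ^ k * (w₁ : ℂ) ^ l * (w₃ : ℂ) ^ (n - k - l) := by
  rw [trinomial_sum_eq, trinomial_sum_eq]
  congr 1
  simp only [rescale_genBernSeries]
  have e12 : ((w₁ : ℂ) * y) * (w₂ : ℂ) = ((w₂ : ℂ) * y) * (w₁ : ℂ) := by ring
  have e13 : ((w₁ : ℂ) * y) * (w₃ : ℂ) = ((w₃ : ℂ) * y) * (w₁ : ℂ) := by ring
  have e23 : ((w₂ : ℂ) * y) * (w₃ : ℂ) = ((w₃ : ℂ) * y) * (w₂ : ℂ) := by ring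
  rw [e13, e12, e23]
  ring
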